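/- Assume β₂₃' = k·β₃₂', β₂₃'' = k·β₃₂'', β₁₃' = k·β₃₁' and β₁₃'' = k·β₃₁'' for some real k > 0, and let A be the adjacency matrix of a graph such that A·1 = 1 (row sums equal one). Then the symmetric constant pair s = r = (1/(2+k))·1 is an equilibrium of the full network honeybee swarm system, consisting of ṡ = -β₂₃' diag(s)Ar + β₃₂' diag(1-s-r)As - β₂₃'' s + β₃₂''(1-s-r) together with the symmetric equation for ṙ (with the roles of s and r exchanged and the parameters β₁₃', β₃₁', β₁₃'', β₃₁'' in place of β₂₃', β₃₂', β₂₃'', β₃₂''). -/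
import Mathlib

theorem stmt_5 (n : ℕ) (hn : 0 < n) (A : Matrix (Fin n) (Fin n) ℝ)
    (hA : ∀ i j, 0 ≤ A i j) (hrow : A.mulVec 1 = 1)
    (k β32' β32'' β31' β31'' : ℝ)
    (hk : 0 < k) (h2 : 0 < β32') (h6 : 0 < β32'') (h4 : 0 < β31') (h8 : 0 < β31'')
    (β23' β23'' β13' β13'' : ℝ)
    (hb1 : β23' = k * β32') (hb2 : β23'' = k * β32'')
    (hb3 : β13' = k * β31') (hb4 : β13'' = k * β31'')
    (s r : Fin n → ℝ) (hs : s = (1 / (2 + k)) • (1 : Fin n → ℝ))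
    (hr : r = (1 / (2 + k)) • (1 : Fin n → ℝ)) :
    (-β23' • (Matrix.diagonal s).mulVec (A.mulVec r)
        + β32' • (Matrix.diagonal (1 - s - r)).mulVec (A.mulVec s)
        - β23'' • s + β32'' • (1 - s - r) = 0) ∧
    (-β13' • (Matrix.diagonal r).mulVec (A.mulVec s)
        + β31' • (Matrix.diagonal (1 - s - r)).mulVec (A.mulVec r)
        - β13'' • r + β31'' • (1 - s - r) = 0) := by
  have hk2 : (2 + k) ≠ 0 := by positivity
  subst hs hr hb1 hb2 hb3 hb4
  have hAc : A.mulVec ((1 / (2 + k)) • (1 : Fin n → ℝ)) = (1 / (2 + k)) • (1 : Fin n → ℝ) := by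
    rw [Matrix.mulVec_smul, hrow]
  rw [hAc]
  constructor <;> funext i <;>
    simp only [Matrix.mulVec_diagonal, Pi.add_apply, Pi.sub_apply, Pi.neg_apply,
      Pi.smul_apply, Pi.one_apply, Pi.zero_apply, smul_eq_mul] <;>
    field_simp <;> ring
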